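/- For M_r in ℂ⁴ given by {Im w₁ = |z₁|², Im w₂ = |z₂|²} with complexification 𝓜 = {w₁ − τ₁ = 2iz₁χ₁, w₂ − τ₂ = 2iz₂χ₂}, and M' in ℂ⁴ given by {Im w' = |z'₁|²+|z'₂|²+|z'₃|²} with complexification 𝓜' = {w' − τ' = 2i(z'₁χ'₁+z'₂χ'₂+z'₃χ'₃)}, for every positive integer r the map 𝓗_r(z,w,χ,τ) = (z₁, z₂, w₁, w₁+w₂, χ₁−2iχ₁τ₁−2iχ₁τ₁^r, χ₂, τ₁^r+τ₁, τ₁+τ₂−2iτ₁²−2iτ₁^{r+1}) maps 𝓜 into 𝓜' and has invertible derivative at 0. -/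

import Mathlib

/-!
Write `f τ = τ ^ r + τ`. Then `𝓗_r` is `(z, w, χ, τ) ↦ (z₁, z₂, w₁, w₁ + w₂, χ₁ (1 - 2i f τ₁), χ₂,
f τ₁, τ₁ + τ₂ - 2i τ₁ f τ₁)`, and for such a map with any `f` the defining function of `𝓜'` pulls
back to `(1 - 2i f τ₁) (w₁ - τ₁ - 2i z₁ χ₁) + (w₂ - τ₂ - 2i z₂ χ₂)`. The derivative at `0` sends
`(z, w, χ, τ)` to `(z₁, z₂, w₁, w₁ + w₂, a χ₁, χ₂, f'(0) τ₁, a τ₁ + τ₂)` with `a = 1 - 2i f 0`,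
which is injective as soon as `a` and `f'(0)` are nonzero.
-/

open Complex

/-- The map `𝓗_r` of Remark (thm:NiceExample), on coordinates
`(z₁,z₂,w₁,w₂,χ₁,χ₂,τ₁,τ₂)`. -/
noncomputable def Hmap (r : ℕ) (p : ℂ × ℂ × ℂ × ℂ × ℂ × ℂ × ℂ × ℂ) :
    ℂ × ℂ × ℂ × ℂ × ℂ × ℂ × ℂ × ℂ :=
  match p with
  | (z₁, z₂, w₁, w₂, χ₁, χ₂, τ₁, τ₂) =>
    (z₁, z₂, w₁, w₁ + w₂,
      χ₁ - 2 * I * χ₁ * τ₁ - 2 * I * χ₁ * τ₁ ^ r, χ₂,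
      τ₁ ^ r + τ₁,
      τ₁ + τ₂ - 2 * I * τ₁ ^ 2 - 2 * I * τ₁ ^ (r + 1))

local notation "ℂ⁸" => ℂ × ℂ × ℂ × ℂ × ℂ × ℂ × ℂ × ℂ

def complexifiedSource : Set ℂ⁸
  | (z₁, z₂, w₁, w₂, χ₁, χ₂, τ₁, τ₂) => w₁ - τ₁ = 2 * I * z₁ * χ₁ ∧ w₂ - τ₂ = 2 * I * z₂ * χ₂

def complexifiedTarget : Set ℂ⁸
  | (z₁', z₂', z₃', w', χ₁', χ₂', χ₃', τ') =>
    w' - τ' = 2 * I * (z₁' * χ₁' + z₂' * χ₂' + z₃' * χ₃')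

def hmapOf (f : ℂ → ℂ) : ℂ⁸ → ℂ⁸
  | (z₁, z₂, w₁, w₂, χ₁, χ₂, τ₁, τ₂) =>
    (z₁, z₂, w₁, w₁ + w₂, χ₁ * (1 - 2 * I * f τ₁), χ₂, f τ₁, τ₁ + τ₂ - 2 * I * τ₁ * f τ₁)

theorem Hmap_eq_hmapOf (r : ℕ) : Hmap r = hmapOf (fun τ => τ ^ r + τ) := by
  funext ⟨z₁, z₂, w₁, w₂, χ₁, χ₂, τ₁, τ₂⟩
  simp only [Hmap, hmapOf, Prod.mk.injEq, true_and]
  constructor <;> ring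

theorem mapsTo_hmapOf (f : ℂ → ℂ) :
    Set.MapsTo (hmapOf f) complexifiedSource complexifiedTarget := by
  rintro ⟨z₁, z₂, w₁, w₂, χ₁, χ₂, τ₁, τ₂⟩ ⟨h₁, h₂⟩
  change w₁ + w₂ - _ = 2 * I * (z₁ * _ + z₂ * χ₂ + w₁ * f τ₁)
  linear_combination (1 - 2 * I * f τ₁) * h₁ + h₂

theorem differentiableAt_hmapOf {f : ℂ → ℂ} (hf : DifferentiableAt ℂ f 0) :
    DifferentiableAt ℂ (hmapOf f) 0 := by
  have hfτ₁ : DifferentiableAt ℂ (fun p : ℂ⁸ => f p.2.2.2.2.2.2.1) 0 :=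
    hf.comp (0 : ℂ⁸) (by fun_prop)
  change DifferentiableAt ℂ (fun p : ℂ⁸ => (p.1, p.2.1, p.2.2.1, p.2.2.1 + p.2.2.2.1,
    p.2.2.2.2.1 * (1 - 2 * I * f p.2.2.2.2.2.2.1), p.2.2.2.2.2.1, f p.2.2.2.2.2.2.1,
    p.2.2.2.2.2.2.1 + p.2.2.2.2.2.2.2 - 2 * I * p.2.2.2.2.2.2.1 * f p.2.2.2.2.2.2.1)) 0
  fun_prop

theorem hasLineDerivAt_hmapOf {f : ℂ → ℂ} {c : ℂ} (hf : HasDerivAt f c 0)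
    (z₁ z₂ w₁ w₂ χ₁ χ₂ τ₁ τ₂ : ℂ) :
    HasLineDerivAt ℂ (hmapOf f)
      (z₁, z₂, w₁, w₁ + w₂, (1 - 2 * I * f 0) * χ₁, χ₂, c * τ₁, (1 - 2 * I * f 0) * τ₁ + τ₂)
      0 (z₁, z₂, w₁, w₂, χ₁, χ₂, τ₁, τ₂) := by
  have hlin (a : ℂ) : HasDerivAt (fun t : ℂ => t * a) a 0 := hasDerivAt_mul_const a
  have hfτ₁ : HasDerivAt (fun t : ℂ => f (t * τ₁)) (c * τ₁) 0 :=
    hf.comp_of_eq 0 (hlin τ₁) (zero_mul τ₁).symm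
  have hχ₁' := (hlin χ₁).mul ((hfτ₁.const_mul (2 * I)).const_sub 1)
  have hτ' := ((hlin τ₁).add (hlin τ₂)).sub (((hlin τ₁).const_mul (2 * I)).mul hfτ₁)
  have hH := (hlin z₁).prodMk <| (hlin z₂).prodMk <| (hlin w₁).prodMk <|
    ((hlin w₁).add (hlin w₂)).prodMk <| hχ₁'.prodMk <| (hlin χ₂).prodMk <| hfτ₁.prodMk hτ'
  refine (hH.congr_deriv ?_).congr_of_eventuallyEq (.of_forall fun t => ?_)
  · simp only [zero_mul, mul_zero, add_zero, Prod.mk.injEq, true_and]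
    constructor <;> ring
  · simp [hmapOf]

theorem fderiv_hmapOf_apply {f : ℂ → ℂ} {c : ℂ} (hf : HasDerivAt f c 0)
    (z₁ z₂ w₁ w₂ χ₁ χ₂ τ₁ τ₂ : ℂ) :
    fderiv ℂ (hmapOf f) 0 (z₁, z₂, w₁, w₂, χ₁, χ₂, τ₁, τ₂) =
      (z₁, z₂, w₁, w₁ + w₂, (1 - 2 * I * f 0) * χ₁, χ₂, c * τ₁, (1 - 2 * I * f 0) * τ₁ + τ₂) :=
  ((differentiableAt_hmapOf hf.differentiableAt).hasFDerivAt.hasLineDerivAt _).unique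
    (hasLineDerivAt_hmapOf hf z₁ z₂ w₁ w₂ χ₁ χ₂ τ₁ τ₂)

theorem bijective_fderiv_hmapOf {f : ℂ → ℂ} {c : ℂ} (hf : HasDerivAt f c 0) (hc : c ≠ 0)
    (hf₀ : 1 - 2 * I * f 0 ≠ 0) : Function.Bijective (fderiv ℂ (hmapOf f) 0) := by
  refine IsArtinian.bijective_of_injective_endomorphism (fderiv ℂ (hmapOf f) 0 : ℂ⁸ →ₗ[ℂ] ℂ⁸) ?_
  rw [injective_iff_map_eq_zero]
  rintro ⟨z₁, z₂, w₁, w₂, χ₁, χ₂, τ₁, τ₂⟩ h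
  simp only [ContinuousLinearMap.coe_coe, fderiv_hmapOf_apply hf, Prod.mk_eq_zero,
    mul_eq_zero, hc, hf₀, false_or] at h
  obtain ⟨rfl, rfl, rfl, hw, rfl, rfl, rfl, hτ⟩ := h
  simp_all

/-- The derivative is written as the cast of a successor, which makes it visibly nonzero. -/
theorem hasDerivAt_pow_add_id (r : ℕ) :
    HasDerivAt (fun τ : ℂ => τ ^ r + τ) ((r * 0 ^ (r - 1) + 1 : ℕ) : ℂ) 0 := by
  push_cast
  exact (hasDerivAt_pow r 0).add (hasDerivAt_id 0)

theorem one_sub_two_I_mul_ofReal_ne_zero (x : ℝ) : 1 - 2 * I * x ≠ 0 := fun h => by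
  simpa using congrArg re h

theorem stmt_16_general (r : ℕ) :
    (∀ z₁ z₂ w₁ w₂ χ₁ χ₂ τ₁ τ₂ : ℂ,
      w₁ - τ₁ = 2 * I * z₁ * χ₁ → w₂ - τ₂ = 2 * I * z₂ * χ₂ →
      match Hmap r (z₁, z₂, w₁, w₂, χ₁, χ₂, τ₁, τ₂) with
      | (z₁', z₂', z₃', w', χ₁', χ₂', χ₃', τ') =>
          w' - τ' = 2 * I * (z₁' * χ₁' + z₂' * χ₂' + z₃' * χ₃')) ∧
    Function.Bijective (fderiv ℂ (Hmap r) 0) := by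
  rw [Hmap_eq_hmapOf]
  constructor
  · intro z₁ z₂ w₁ w₂ χ₁ χ₂ τ₁ τ₂ h₁ h₂
    have hp : (z₁, z₂, w₁, w₂, χ₁, χ₂, τ₁, τ₂) ∈ complexifiedSource := ⟨h₁, h₂⟩
    exact mapsTo_hmapOf _ hp
  · refine bijective_fderiv_hmapOf (hasDerivAt_pow_add_id r)
      (Nat.cast_ne_zero.2 (Nat.succ_ne_zero _)) ?_
    have h := one_sub_two_I_mul_ofReal_ne_zero (0 ^ r + 0)
    push_cast at h
    exact h

theorem stmt_16 (r : ℕ) (hr : 1 ≤ r) :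
    (∀ z₁ z₂ w₁ w₂ χ₁ χ₂ τ₁ τ₂ : ℂ,
      w₁ - τ₁ = 2 * I * z₁ * χ₁ → w₂ - τ₂ = 2 * I * z₂ * χ₂ →
      match Hmap r (z₁, z₂, w₁, w₂, χ₁, χ₂, τ₁, τ₂) with
      | (z₁', z₂', z₃', w', χ₁', χ₂', χ₃', τ') =>
          w' - τ' = 2 * I * (z₁' * χ₁' + z₂' * χ₂' + z₃' * χ₃')) ∧
    Function.Bijective (fderiv ℂ (Hmap r) 0) :=
  stmt_16_general r
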